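/- For every δ ∈ [0, 1/2] and every R1 ∈ [0, 2], the supremum over α ∈ [0, 1] of the quantity 2α − 2·h2(δ ⋆ h2⁻¹((max{2α, R1} − R1)/2)) equals 2·(1 − h2(δ ⋆ h2⁻¹(1 − R1/2))), and this supremum is attained at α = 1. -/
import Mathlib

open MeasureTheory

noncomputable def h2 (p : ℝ) : ℝ :=
  -(p * Real.logb 2 p) - (1 - p) * Real.logb 2 (1 - p)

noncomputable def h2inv (q : ℝ) : ℝ :=
  if q < 0 then 0 else sInf {r : ℝ | 0 ≤ r ∧ r ≤ 1 / 2 ∧ h2 r = q}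

def bconv (a b : ℝ) : ℝ := a * (1 - b) + (1 - a) * b

lemma h2_eq (p : ℝ) : h2 p = Real.binEntropy p / Real.log 2 := by
  simp only [h2, Real.binEntropy, Real.logb, Real.log_inv]
  ring

lemma log2_pos : (0:ℝ) < Real.log 2 := Real.log_pos one_lt_two

lemma h2_half : h2 (1/2) = 1 := by
  rw [h2_eq]
  rw [show (1:ℝ)/2 = 2⁻¹ by norm_num, Real.binEntropy_two_inv, div_self log2_pos.ne']

lemma h2_continuous : Continuous h2 := by
  simp only [funext h2_eq]
  exact Real.binEntropy_continuous.div_const _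

lemma h2_strictMonoOn : StrictMonoOn h2 (Set.Icc 0 (1/2)) := by
  intro a ha b hb hab
  rw [h2_eq, h2_eq, div_lt_div_iff_of_pos_right log2_pos]
  exact Real.binEntropy_strictMonoOn (by simpa [one_div] using ha) (by simpa [one_div] using hb) hab

lemma h2_hasDerivAt {p : ℝ} (hp0 : p ≠ 0) (hp1 : p ≠ 1) :
    HasDerivAt h2 ((Real.log (1 - p) - Real.log p) / Real.log 2) p := by
  have := (Real.hasDerivAt_binEntropy hp0 hp1).div_const (Real.log 2)
  exact this.congr_of_eventuallyEq (Filter.Eventually.of_forall fun x => (h2_eq x))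

lemma h2inv_spec {q : ℝ} (hq : q ∈ Set.Icc (0:ℝ) 1) :
    h2inv q ∈ Set.Icc (0:ℝ) (1/2) ∧ h2 (h2inv q) = q := by
  have hq0 : ¬ q < 0 := not_lt.2 hq.1
  rw [h2inv, if_neg hq0]
  set S : Set ℝ := {r : ℝ | 0 ≤ r ∧ r ≤ 1 / 2 ∧ h2 r = q} with hS
  have hclosed : IsClosed S := by
    have : S = (Set.Icc (0:ℝ) (1/2)) ∩ h2 ⁻¹' {q} := by
      ext r; simp [hS, Set.mem_Icc, and_assoc]
    rw [this]
    exact isClosed_Icc.inter (isClosed_singleton.preimage h2_continuous)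
  have hne : S.Nonempty := by
    have h0 : h2 0 = 0 := by simp [h2]
    have : q ∈ Set.Icc (h2 0) (h2 (1/2)) := by rw [h0, h2_half]; exact hq
    obtain ⟨r, hr, hrq⟩ := intermediate_value_Icc (by norm_num : (0:ℝ) ≤ 1/2)
      (h2_continuous.continuousOn) this
    exact ⟨r, hr.1, hr.2, hrq⟩
  have hbdd : BddBelow S := ⟨0, fun r hr => hr.1⟩
  have hmem : sInf S ∈ S := hclosed.csInf_mem hne hbdd
  exact ⟨⟨hmem.1, hmem.2.1⟩, hmem.2.2⟩

lemma gerber {δ : ℝ} (hδ : δ ∈ Set.Icc (0:ℝ) (1/2)) {r1 r2 : ℝ}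
    (h1 : 0 ≤ r1) (h12 : r1 ≤ r2) (h2r : r2 ≤ 1/2) :
    h2 (bconv δ r2) - h2 (bconv δ r1) ≤ h2 r2 - h2 r1 := by
  obtain ⟨hδ0, hδ1⟩ := hδ
  set g : ℝ → ℝ := fun r => h2 r - h2 (δ + (1 - 2*δ) * r) with hg
  set D : ℝ → ℝ := fun r =>
    (Real.log (1-r) - Real.log r) / Real.log 2
      - ((Real.log (1 - (δ + (1 - 2*δ) * r)) - Real.log (δ + (1 - 2*δ) * r)) / Real.log 2)
          * (1 - 2*δ) with hD
  have hder : ∀ r ∈ Set.Ioo (0:ℝ) (1/2), HasDerivAt g (D r) r := by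
    intro r hr
    obtain ⟨hr0, hr1⟩ := hr
    have hs0 : 0 < δ + (1 - 2*δ) * r := by nlinarith
    have hs1 : δ + (1 - 2*δ) * r ≤ 1/2 := by nlinarith
    have d1 : HasDerivAt h2 ((Real.log (1-r) - Real.log r) / Real.log 2) r :=
      h2_hasDerivAt hr0.ne' (by linarith)
    have haff : HasDerivAt (fun r : ℝ => δ + (1 - 2*δ) * r) (1 - 2*δ) r := by
      simpa using ((hasDerivAt_id r).const_mul (1 - 2*δ)).const_add δ
    have d2 := (h2_hasDerivAt hs0.ne' (by linarith : δ + (1 - 2*δ) * r ≠ 1)).comp r haff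
    exact d1.sub d2
  have key : MonotoneOn g (Set.Icc 0 (1/2)) := by
    apply monotoneOn_of_deriv_nonneg (convex_Icc _ _)
    · exact (h2_continuous.sub (h2_continuous.comp (by continuity))).continuousOn
    · rw [interior_Icc]
      exact fun r hr => ((hder r hr).differentiableAt).differentiableWithinAt
    · rw [interior_Icc]
      intro r hr
      rw [(hder r hr).deriv]
      obtain ⟨hr0, hr1⟩ := hr
      set s := δ + (1 - 2*δ) * r with hs
      have hrs : r ≤ s := by nlinarith
      have hs1 : s ≤ 1/2 := by nlinarith
      have hlogA : Real.log s ≤ Real.log (1 - s) :=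
        Real.log_le_log (by linarith) (by linarith)
      have hlog1 : Real.log (1 - s) ≤ Real.log (1 - r) :=
        Real.log_le_log (by linarith) (by linarith)
      have hlog2 : Real.log r ≤ Real.log s := Real.log_le_log hr0 hrs
      have hBnn : (0:ℝ) ≤ Real.log (1-s) - Real.log s := by linarith
      have hBA : Real.log (1-s) - Real.log s ≤ Real.log (1-r) - Real.log r := by linarith
      have step1 : ((Real.log (1 - s) - Real.log s) / Real.log 2) * (1 - 2*δ)
          ≤ (Real.log (1 - s) - Real.log s) / Real.log 2 :=
        mul_le_of_le_one_right (by positivity) (by linarith)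
      have step2 : (Real.log (1 - s) - Real.log s) / Real.log 2
          ≤ (Real.log (1 - r) - Real.log r) / Real.log 2 := by gcongr
      simp only [hD, ← hs]
      linarith
  have hr1m : r1 ∈ Set.Icc (0:ℝ) (1/2) := ⟨h1, le_trans h12 h2r⟩
  have hr2m : r2 ∈ Set.Icc (0:ℝ) (1/2) := ⟨le_trans h1 h12, h2r⟩
  have hmono := key hr1m hr2m h12
  have hb1 : bconv δ r1 = δ + (1 - 2*δ) * r1 := by unfold bconv; ring
  have hb2 : bconv δ r2 = δ + (1 - 2*δ) * r2 := by unfold bconv; ring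
  rw [hb1, hb2]
  simp only [hg] at hmono
  linarith

/-- For every `δ ∈ [0,1/2]` and `R1 ∈ [0,2]`, the supremum over `α ∈ [0,1]` of
`2α − 2 h2(δ ⋆ h2⁻¹((max{2α, R1} − R1)/2))` equals
`2(1 − h2(δ ⋆ h2⁻¹(1 − R1/2)))`, attained at `α = 1`. -/
theorem stmt4 (δ R1 : ℝ) (hδ : δ ∈ Set.Icc (0 : ℝ) (1 / 2))
    (hR1 : R1 ∈ Set.Icc (0 : ℝ) 2)
    (F : ℝ → ℝ)
    (hF : F = fun α => 2 * α - 2 * h2 (bconv δ (h2inv ((max (2 * α) R1 - R1) / 2)))) :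
    IsGreatest (F '' Set.Icc (0 : ℝ) 1) (2 * (1 - h2 (bconv δ (h2inv (1 - R1 / 2))))) ∧
    F 1 = 2 * (1 - h2 (bconv δ (h2inv (1 - R1 / 2)))) := by
  obtain ⟨hR0, hR2⟩ := hR1
  have hq2mem : (1 - R1/2) ∈ Set.Icc (0:ℝ) 1 := ⟨by linarith, by linarith⟩
  obtain ⟨hr2mem, hr2eq⟩ := h2inv_spec hq2mem
  have hF1 : F 1 = 2 * (1 - h2 (bconv δ (h2inv (1 - R1 / 2)))) := by
    rw [hF]
    simp only
    have harg : (max (2*(1:ℝ)) R1 - R1) / 2 = 1 - R1/2 := by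
      rw [max_eq_left (by linarith : R1 ≤ 2*(1:ℝ))]; ring
    rw [harg]; ring
  refine ⟨⟨⟨1, ⟨by norm_num, le_refl 1⟩, hF1⟩, ?_⟩, hF1⟩
  rintro y ⟨α, ⟨hα0, hα1⟩, rfl⟩
  have hq1mem : (max (2*α) R1 - R1) / 2 ∈ Set.Icc (0:ℝ) 1 := by
    constructor
    · have := le_max_right (2*α) R1; linarith
    · have h1 : max (2*α) R1 ≤ 2 := max_le (by linarith) hR2
      linarith
  obtain ⟨hr1mem, hr1eq⟩ := h2inv_spec hq1mem
  have hq12 : (max (2*α) R1 - R1) / 2 ≤ 1 - R1/2 := by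
    have h1 : max (2*α) R1 ≤ 2 := max_le (by linarith) hR2
    linarith
  have hle : h2inv ((max (2*α) R1 - R1) / 2) ≤ h2inv (1 - R1/2) := by
    by_contra h
    push_neg at h
    have := h2_strictMonoOn hr2mem hr1mem h
    rw [hr1eq, hr2eq] at this
    linarith
  have hger := gerber hδ hr1mem.1 hle hr2mem.2
  rw [hr1eq, hr2eq] at hger
  have hαq : 1 - R1/2 - (max (2*α) R1 - R1) / 2 ≤ 1 - α := by
    have := le_max_left (2*α) R1; linarith
  rw [hF]
  simp only
  linarith
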